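/- Dinkelbach characterization of fractional programming: let f, g be continuous real-valued functions on a nonempty compact set X with g(x) > 0 for all x ∈ X, and let λ* = min_{x∈X} f(x)/g(x). Then min_{x∈X} (f(x) − λ* g(x)) = 0, and a point x* ∈ X minimizes f/g over X if and only if f(x*) − λ* g(x*) = 0. -/

import Mathlib

theorem div_eq_iff_sub_mul_eq_zero {𝕜 : Type*} [DivisionRing 𝕜] {a b c : 𝕜} (hb : b ≠ 0) :
    a / b = c ↔ a - c * b = 0 := by
  rw [div_eq_iff hb, sub_eq_zero]

section LinearOrderedField

variable {α 𝕜 : Type*} [Field 𝕜] [LinearOrder 𝕜] [IsStrictOrderedRing 𝕜]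

theorem le_div_iff_sub_mul_nonneg {a b c : 𝕜} (hb : 0 < b) : c ≤ a / b ↔ 0 ≤ a - c * b := by
  rw [le_div_iff₀ hb, sub_nonneg]

theorem isLeast_sub_mul_image_of_isLeast_div_image {X : Set α} {f g : α → 𝕜} {lam : 𝕜}
    (hgpos : ∀ x ∈ X, 0 < g x) (hlam : IsLeast ((fun x => f x / g x) '' X) lam) :
    IsLeast ((fun x => f x - lam * g x) '' X) 0 := by
  obtain ⟨⟨x₀, hx₀, hx₀_min⟩, hlam_le⟩ := hlam
  refine ⟨⟨x₀, hx₀, (div_eq_iff_sub_mul_eq_zero (hgpos x₀ hx₀).ne').1 hx₀_min⟩, ?_⟩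
  rintro _ ⟨x, hx, rfl⟩
  exact (le_div_iff_sub_mul_nonneg (hgpos x hx)).1 (hlam_le ⟨x, hx, rfl⟩)

end LinearOrderedField

theorem dinkelbach_characterization_general {n : ℕ} (X : Set (Fin n → ℝ)) (f g : (Fin n → ℝ) → ℝ)
    (hgpos : ∀ x ∈ X, 0 < g x)
    (lam : ℝ) (hlam : IsLeast ((fun x => f x / g x) '' X) lam) :
    IsLeast ((fun x => f x - lam * g x) '' X) 0 ∧
    ∀ x ∈ X, (f x / g x = lam ↔ f x - lam * g x = 0) :=
  ⟨isLeast_sub_mul_image_of_isLeast_div_image hgpos hlam,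
    fun x hx => div_eq_iff_sub_mul_eq_zero (hgpos x hx).ne'⟩

/-- Dinkelbach characterization of fractional programming: let `f, g` be continuous
real-valued functions on a nonempty compact set `X ⊆ ℝⁿ` with `g > 0` on `X`, and let
`λ* = min_{x∈X} f(x)/g(x)`. Then `min_{x∈X} (f(x) − λ* g(x)) = 0`, and a point
`x* ∈ X` minimizes `f/g` over `X` iff `f(x*) − λ* g(x*) = 0`. -/
theorem dinkelbach_characterization {n : ℕ} (X : Set (Fin n → ℝ)) (f g : (Fin n → ℝ) → ℝ)
    (hX : X.Nonempty) (hXc : IsCompact X)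
    (hf : ContinuousOn f X) (hg : ContinuousOn g X)
    (hgpos : ∀ x ∈ X, 0 < g x)
    (lam : ℝ) (hlam : IsLeast ((fun x => f x / g x) '' X) lam) :
    IsLeast ((fun x => f x - lam * g x) '' X) 0 ∧
    ∀ x ∈ X, (f x / g x = lam ↔ f x - lam * g x = 0) :=
  dinkelbach_characterization_general X f g hgpos lam hlam
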